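/- Let H ∈ (0,1), let A be a Borel subset of [0,1], and let f : [0,1] → ℝ^d be (H−ε)-Hölder continuous for every ε > 0 (i.e. for each ε ∈ (0,H) there exists K_ε ≥ 0 with ‖f(x)−f(y)‖_∞ ≤ K_ε |x−y|^{H−ε} for all x, y ∈ [0,1]). Then dim(A) = dim_{Ψ,H}(Gr_A(f)). -/

import Mathlib

open MeasureTheory ENNReal Set

noncomputable section

/-- The `H`-parabolic rectangle `[a, a+δ] × ∏_{j=1}^d [b_j, b_j + δ^H]`. -/
def parRect (d : ℕ) (H : ℝ) (a : ℝ) (b : Fin d → ℝ) (δ : ℝ) : Set (ℝ × (Fin d → ℝ)) :=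
  Set.Icc a (a + δ) ×ˢ Set.univ.pi fun j => Set.Icc (b j) (b j + δ ^ H)

/-- The `H`-parabolic `β`-dimensional Hausdorff content `Ψ_H^β(F)`:
the infimum of `Σ_j δ_j^β` over all countable covers of `F` by parabolic rectangles. -/
def parContent (d : ℕ) (H β : ℝ) (F : Set (ℝ × (Fin d → ℝ))) : ℝ≥0∞ :=
  ⨅ (r : ℕ → ℝ × (Fin d → ℝ) × ℝ) (_ : ∀ n, 0 < (r n).2.2)
    (_ : F ⊆ ⋃ n, parRect d H (r n).1 (r n).2.1 (r n).2.2),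
    ∑' n, ENNReal.ofReal ((r n).2.2 ^ β)

/-- The `H`-parabolic Hausdorff dimension `dim_{Ψ,H}(F) = inf {β : Ψ_H^β(F) = 0}`. -/
def parDim (d : ℕ) (H : ℝ) (F : Set (ℝ × (Fin d → ℝ))) : ℝ :=
  sInf {β : ℝ | 0 ≤ β ∧ parContent d H β F = 0}

/-!
Projecting a cover of the graph by parabolic rectangles to the time axis gives a cover of `A`
by intervals of the same lengths, so `Ψ_H^β(Gr_A f) = 0` forces `μH[β] A = 0`.

Conversely, over a time set of diameter `ρ ≤ 1` an `(H - ε)`-Hölder `f` moves by at most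
`K ρ^(H-ε)` in each coordinate, so the graph there is covered by `(2K + 1)^d ρ^(-dε)` parabolic
rectangles of size `ρ`. Since `Ψ_H^β` is an outer measure, comparing it with the Hausdorff measure
built from these local bounds gives `Ψ_H^β(Gr_A f) ≤ (2K + 1)^d μH[s] A = 0` whenever
`dim A < s ≤ β - dε`.
-/

open Filter Topology Metric
open scoped NNReal

theorem exists_mem_Icc_grid {c L h x : ℝ} (hh : 0 < h) (hx : x ∈ Icc c (c + L)) :
    ∃ i : Fin (⌊L / h⌋₊ + 1), x ∈ Icc (c + i * h) (c + i * h + h) := by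
  have hfloor : ⌊(x - c) / h⌋₊ ≤ ⌊L / h⌋₊ :=
    Nat.floor_le_floor (div_le_div_of_nonneg_right (by linarith [hx.2]) hh.le)
  refine ⟨⟨⌊(x - c) / h⌋₊, Nat.lt_succ_of_le hfloor⟩, ?_, ?_⟩
  · have := Nat.floor_le (div_nonneg (sub_nonneg.2 hx.1) hh.le)
    rw [le_div_iff₀ hh] at this
    simp only
    linarith
  · have := Nat.lt_floor_add_one ((x - c) / h)
    rw [div_lt_iff₀ hh] at this
    simp only
    linarith

theorem subset_Icc_sInf_of_ediam_le {S : Set ℝ} {ρ : ℝ} (hρ : 0 ≤ ρ)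
    (hS : ediam S ≤ ENNReal.ofReal ρ) :
    S ⊆ Icc (sInf S) (sInf S + ρ) := by
  intro t ht
  have hdist : ∀ t' ∈ S, |t - t'| ≤ ρ := fun t' ht' => by
    rw [← Real.dist_eq, ← edist_le_ofReal hρ]
    exact (edist_le_ediam_of_mem ht ht').trans hS
  refine ⟨csInf_le ⟨t - ρ, fun t' ht' => ?_⟩ ht, ?_⟩
  · linarith [abs_le.1 (hdist t' ht')]
  · refine sub_le_iff_le_add.1 (le_csInf ⟨t, ht⟩ fun t' ht' => ?_)
    linarith [abs_le.1 (hdist t' ht')]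

theorem natFloor_add_one_pow_mul_rpow_le {d : ℕ} {K H γ β ρ : ℝ} (hK : 0 ≤ K) (hγH : γ ≤ H)
    (hρ : 0 < ρ) (hρ1 : ρ ≤ 1) :
    ((⌊2 * K * ρ ^ γ / ρ ^ H⌋₊ + 1 : ℕ) : ℝ) ^ d * ρ ^ β ≤
      (2 * K + 1) ^ d * ρ ^ (β - d * (H - γ)) := by
  have hργH : 1 ≤ ρ ^ (γ - H) := Real.one_le_rpow_of_pos_of_le_one_of_nonpos hρ hρ1 (by linarith)
  have hN : ((⌊2 * K * ρ ^ γ / ρ ^ H⌋₊ + 1 : ℕ) : ℝ) ≤ (2 * K + 1) * ρ ^ (γ - H) := by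
    rw [mul_div_assoc, ← Real.rpow_sub hρ]
    have := Nat.floor_le (by positivity : 0 ≤ 2 * K * ρ ^ (γ - H))
    push_cast
    nlinarith
  calc ((⌊2 * K * ρ ^ γ / ρ ^ H⌋₊ + 1 : ℕ) : ℝ) ^ d * ρ ^ β
      ≤ ((2 * K + 1) * ρ ^ (γ - H)) ^ d * ρ ^ β := by gcongr
    _ = (2 * K + 1) ^ d * ρ ^ (β - d * (H - γ)) := by
      rw [mul_pow, ← Real.rpow_natCast (ρ ^ (γ - H)), ← Real.rpow_mul hρ.le, mul_assoc,
        ← Real.rpow_add hρ]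
      ring_nf

theorem le_ofReal_mul_rpow_of_forall_lt {x : ℝ≥0∞} {C D s : ℝ} (hs : 0 < s) (hD : D < 1)
    (h : ∀ ρ, D < ρ → ρ ≤ 1 → x ≤ ENNReal.ofReal (C * ρ ^ s)) :
    x ≤ ENNReal.ofReal (C * D ^ s) := by
  have hcont : Tendsto (fun ρ => ENNReal.ofReal (C * ρ ^ s)) (𝓝[>] D)
      (𝓝 (ENNReal.ofReal (C * D ^ s))) :=
    ((ENNReal.continuous_ofReal.tendsto _).comp
      ((Real.continuousAt_rpow_const D s (Or.inr hs.le)).const_mul C)).mono_left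
      nhdsWithin_le_nhds
  exact ge_of_tendsto hcont (mem_of_superset (Ioc_mem_nhdsGT hD) fun ρ hρ => h ρ hρ.1 hρ.2)

theorem csInf_eq_of_Ioi_subset_of_subset_Ici {α : Type*} [ConditionallyCompleteLinearOrder α]
    [NoMaxOrder α] [DenselyOrdered α] {S : Set α} {a : α} (h₁ : Ioi a ⊆ S) (h₂ : S ⊆ Ici a) :
    sInf S = a :=
  le_antisymm ((csInf_le_csInf ⟨a, h₂⟩ nonempty_Ioi h₁).trans_eq csInf_Ioi)
    (le_csInf (nonempty_Ioi.mono h₁) h₂)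

theorem holderOnWith_of_norm_sub_le {E : Type*} [SeminormedAddCommGroup E] {f : ℝ → E}
    {S : Set ℝ} {K r : ℝ} (hK : 0 ≤ K) (hr : 0 ≤ r)
    (h : ∀ x ∈ S, ∀ y ∈ S, ‖f x - f y‖ ≤ K * |x - y| ^ r) :
    HolderOnWith K.toNNReal r.toNNReal f S := fun x hx y hy => by
  rw [edist_dist, edist_dist, Real.coe_toNNReal r hr]
  change ENNReal.ofReal _ ≤ ENNReal.ofReal K * _
  rw [ENNReal.ofReal_rpow_of_nonneg dist_nonneg hr, ← ENNReal.ofReal_mul hK, dist_eq_norm,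
    Real.dist_eq]
  exact ENNReal.ofReal_le_ofReal (h x hx y hy)

theorem exists_holderOnWith_exponent_near {E : Type*} [SeminormedAddCommGroup E] {f : ℝ → E}
    {S : Set ℝ} {H η : ℝ} (hH : 0 < H) (hη : 0 < η)
    (hf : ∀ ε ∈ Ioo (0 : ℝ) H, ∃ K : ℝ, 0 ≤ K ∧
      ∀ x ∈ S, ∀ y ∈ S, ‖f x - f y‖ ≤ K * |x - y| ^ (H - ε)) :
    ∃ K γ : ℝ≥0, HolderOnWith K γ f S ∧ (γ : ℝ) ≤ H ∧ H - γ ≤ η := by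
  set ε := min (H / 2) η
  have hε : ε ∈ Ioo 0 H := ⟨lt_min (half_pos hH) hη, (min_le_left _ _).trans_lt (half_lt_self hH)⟩
  obtain ⟨K, hK, hfK⟩ := hf ε hε
  have hγ : 0 ≤ H - ε := by linarith [hε.2]
  refine ⟨_, _, holderOnWith_of_norm_sub_le hK hγ hfK, ?_, ?_⟩ <;>
    simp only [Real.coe_toNNReal _ hγ] <;> linarith [hε.1, min_le_right (H / 2) η]

section parContent

variable {d : ℕ} {H β : ℝ}

theorem parContent_le_tsum {F : Set (ℝ × (Fin d → ℝ))} (r : ℕ → ℝ × (Fin d → ℝ) × ℝ)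
    (hr : ∀ n, 0 < (r n).2.2) (hF : F ⊆ ⋃ n, parRect d H (r n).1 (r n).2.1 (r n).2.2) :
    parContent d H β F ≤ ∑' n, ENNReal.ofReal ((r n).2.2 ^ β) :=
  iInf₂_le_of_le r hr (iInf_le _ hF)

theorem exists_parCover_tsum_lt {F : Set (ℝ × (Fin d → ℝ))} {c : ℝ≥0∞}
    (h : parContent d H β F < c) :
    ∃ r : ℕ → ℝ × (Fin d → ℝ) × ℝ, (∀ n, 0 < (r n).2.2) ∧
      F ⊆ (⋃ n, parRect d H (r n).1 (r n).2.1 (r n).2.2) ∧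
      ∑' n, ENNReal.ofReal ((r n).2.2 ^ β) < c := by
  simpa only [parContent, iInf_lt_iff, exists_prop] using h

theorem parContent_mono : Monotone (parContent d H β) := fun _ _ hFG =>
  le_iInf₂ fun r hr => le_iInf fun hG => parContent_le_tsum r hr (hFG.trans hG)

theorem parContent_zero_exponent (F : Set (ℝ × (Fin d → ℝ))) : parContent d H 0 F = ⊤ :=
  top_unique <| le_iInf₂ fun _ _ => le_iInf fun _ => by simp

theorem exists_pos_tsum_ofReal_rpow_lt (hβ : 0 < β) {η : ℝ≥0∞} (hη : η ≠ 0) :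
    ∃ p : ℕ → ℝ, (∀ n, 0 < p n) ∧ ∑' n, ENNReal.ofReal (p n ^ β) < η := by
  obtain ⟨ε, hε0, hεη⟩ := ENNReal.exists_pos_sum_of_countable hη ℕ
  refine ⟨fun n => (ε n : ℝ) ^ β⁻¹, fun n => Real.rpow_pos_of_pos (hε0 n) _, ?_⟩
  convert hεη using 3 with n
  rw [Real.rpow_inv_rpow (ε n).coe_nonneg hβ.ne', ENNReal.ofReal_coe_nnreal]

theorem parContent_empty (hβ : 0 < β) : parContent d H β ∅ = 0 := by
  refine le_antisymm (forall_gt_iff_le.mp fun η hη => ?_) zero_le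
  obtain ⟨p, hp0, hpη⟩ := exists_pos_tsum_ofReal_rpow_lt hβ hη.ne'
  exact (parContent_le_tsum (fun n => (0, 0, p n)) hp0 (empty_subset _)).trans_lt hpη

theorem parContent_parRect_le (hβ : 0 < β) (a : ℝ) (b : Fin d → ℝ) {δ : ℝ} (hδ : 0 < δ) :
    parContent d H β (parRect d H a b δ) ≤ ENNReal.ofReal (δ ^ β) := by
  refine ENNReal.le_of_forall_pos_le_add fun η hη _ => ?_
  obtain ⟨p, hp0, hpη⟩ := exists_pos_tsum_ofReal_rpow_lt hβ (ENNReal.coe_ne_zero.2 hη.ne')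
  let r : ℕ → ℝ × (Fin d → ℝ) × ℝ := fun n => Nat.casesOn n (a, b, δ) fun m => (a, b, p m)
  calc parContent d H β (parRect d H a b δ)
      ≤ ∑' n, ENNReal.ofReal ((r n).2.2 ^ β) :=
        parContent_le_tsum r (fun n => by cases n <;> simp [r, hδ, hp0])
          (subset_iUnion_of_subset 0 subset_rfl)
    _ = ENNReal.ofReal (δ ^ β) + ∑' m, ENNReal.ofReal (p m ^ β) :=
        tsum_eq_zero_add' ENNReal.summable
    _ ≤ ENNReal.ofReal (δ ^ β) + η := by gcongr

theorem parContent_iUnion_le (F : ℕ → Set (ℝ × (Fin d → ℝ))) :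
    parContent d H β (⋃ n, F n) ≤ ∑' n, parContent d H β (F n) := by
  refine ENNReal.le_of_forall_pos_le_add fun η hη hfin => ?_
  obtain ⟨ε, hε0, hεη⟩ := ENNReal.exists_pos_sum_of_countable (ENNReal.coe_ne_zero.2 hη.ne') ℕ
  have hcover : ∀ n, parContent d H β (F n) < parContent d H β (F n) + ε n := fun n =>
    ENNReal.lt_add_right (ne_top_of_le_ne_top hfin.ne (ENNReal.le_tsum n))
      (ENNReal.coe_ne_zero.2 (hε0 n).ne')
  choose r hr0 hrF hrsum using fun n => exists_parCover_tsum_lt (hcover n)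
  let e : ℕ ≃ ℕ × ℕ := Nat.pairEquiv.symm
  have hcov : (⋃ n, F n) ⊆ ⋃ k, parRect d H (r (e k).1 (e k).2).1 (r (e k).1 (e k).2).2.1
      (r (e k).1 (e k).2).2.2 := by
    refine iUnion_subset fun n x hx => ?_
    obtain ⟨m, hm⟩ := mem_iUnion.1 (hrF n hx)
    exact mem_iUnion.2 ⟨e.symm (n, m), by simpa using hm⟩
  calc parContent d H β (⋃ n, F n)
      ≤ ∑' k, ENNReal.ofReal ((r (e k).1 (e k).2).2.2 ^ β) :=
        parContent_le_tsum _ (fun k => hr0 _ _) hcov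
    _ = ∑' n, ∑' m, ENNReal.ofReal ((r n m).2.2 ^ β) := by
        rw [e.tsum_eq (fun q => ENNReal.ofReal ((r q.1 q.2).2.2 ^ β)),
          ENNReal.tsum_prod (f := fun n m => ENNReal.ofReal ((r n m).2.2 ^ β))]
    _ ≤ ∑' n, (parContent d H β (F n) + ε n) := ENNReal.tsum_le_tsum fun n => (hrsum n).le
    _ = ∑' n, parContent d H β (F n) + ∑' n, (ε n : ℝ≥0∞) := ENNReal.tsum_add
    _ ≤ ∑' n, parContent d H β (F n) + η := by gcongr

variable (d H) in
def parOuterMeasure (hβ : 0 < β) : OuterMeasure (ℝ × (Fin d → ℝ)) where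
  measureOf := parContent d H β
  empty := parContent_empty hβ
  mono h := parContent_mono h
  iUnion_nat F _ := parContent_iUnion_le F

theorem hausdorffMeasure_image_fst_eq_zero (hβ : 0 < β)
    {F : Set (ℝ × (Fin d → ℝ))} (hF : parContent d H β F = 0) :
    μH[β] (Prod.fst '' F) = 0 := by
  have hlt : ∀ n : ℕ, parContent d H β F < (n : ℝ≥0∞)⁻¹ := fun n =>
    hF ▸ ENNReal.inv_pos.2 (ENNReal.natCast_ne_top n)
  choose r hr0 hrF hrsum using fun n => exists_parCover_tsum_lt (hlt n)
  let I : ℕ → ℕ → Set ℝ := fun n m => Icc (r n m).1 ((r n m).1 + (r n m).2.2)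
  have hdiam : ∀ n m, ediam (I n m) ^ β = ENNReal.ofReal ((r n m).2.2 ^ β) := fun n m => by
    rw [Real.ediam_Icc, add_sub_cancel_left, ENNReal.ofReal_rpow_of_pos (hr0 n m)]
  have hsum : ∀ n, ∑' m, ediam (I n m) ^ β ≤ (n : ℝ≥0∞)⁻¹ := fun n => by
    simp only [hdiam]
    exact (hrsum n).le
  have hsmall : ∀ n m, ediam (I n m) ≤ ((n : ℝ≥0∞)⁻¹) ^ β⁻¹ := fun n m =>
    (ENNReal.le_rpow_inv_iff hβ).2 ((ENNReal.le_tsum m).trans (hsum n))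
  have hcover : ∀ n, Prod.fst '' F ⊆ ⋃ m, I n m := by
    rintro n _ ⟨x, hx, rfl⟩
    obtain ⟨m, hm⟩ := mem_iUnion.1 (hrF n hx)
    exact mem_iUnion.2 ⟨m, hm.1⟩
  have hr : Tendsto (fun n : ℕ => ((n : ℝ≥0∞)⁻¹) ^ β⁻¹) atTop (𝓝 0) := by
    have := ((ENNReal.continuous_rpow_const (y := β⁻¹)).tendsto 0).comp
      ENNReal.tendsto_inv_nat_nhds_zero
    rwa [ENNReal.zero_rpow_of_pos (inv_pos.2 hβ)] at this
  have hlim : Tendsto (fun n => ∑' m, ediam (I n m) ^ β) atTop (𝓝 0) :=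
    tendsto_of_tendsto_of_tendsto_of_le_of_le tendsto_const_nhds
      ENNReal.tendsto_inv_nat_nhds_zero (fun _ => zero_le) hsum
  refine le_antisymm ?_ zero_le
  calc μH[β] (Prod.fst '' F) ≤ liminf (fun n => ∑' m, ediam (I n m) ^ β) atTop :=
        Measure.hausdorffMeasure_le_liminf_tsum β _ _ hr I (Eventually.of_forall hsmall)
          (Eventually.of_forall hcover)
    _ = 0 := hlim.liminf_eq

theorem dimH_image_fst_le_of_parContent_eq_zero (hβ : 0 ≤ β)
    {F : Set (ℝ × (Fin d → ℝ))} (hF : parContent d H β F = 0) :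
    dimH (Prod.fst '' F) ≤ ENNReal.ofReal β := by
  have hβ' : 0 < β := hβ.lt_of_ne fun h => by simp [← h, parContent_zero_exponent] at hF
  refine dimH_le_of_hausdorffMeasure_ne_top ?_
  rw [Real.coe_toNNReal β hβ, hausdorffMeasure_image_fst_eq_zero hβ' hF]
  exact ENNReal.zero_ne_top

theorem graph_subset_iUnion_parRect {a ρ L : ℝ} {c : Fin d → ℝ} {f : ℝ → Fin d → ℝ}
    {S : Set ℝ} (hρ : 0 < ρ) (hS : S ⊆ Icc a (a + ρ))
    (hfS : ∀ t ∈ S, ∀ j, f t j ∈ Icc (c j) (c j + L)) :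
    (fun t => (t, f t)) '' S ⊆
      ⋃ i : Fin d → Fin (⌊L / ρ ^ H⌋₊ + 1), parRect d H a (fun j => c j + i j * ρ ^ H) ρ := by
  rintro _ ⟨t, ht, rfl⟩
  choose i hi using fun j => exists_mem_Icc_grid (Real.rpow_pos_of_pos hρ H) (hfS t ht j)
  exact mem_iUnion.2 ⟨i, hS ht, mem_univ_pi.2 hi⟩

theorem parContent_graph_le_of_holderOnWith (hβ : 0 < β) {K γ : ℝ≥0}
    {f : ℝ → Fin d → ℝ} {S : Set ℝ} (hf : HolderOnWith K γ f S) (hγH : (γ : ℝ) ≤ H)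
    {ρ : ℝ} (hρ : 0 < ρ) (hρ1 : ρ ≤ 1) (hS : ediam S ≤ ENNReal.ofReal ρ) :
    parContent d H β ((fun t => (t, f t)) '' S) ≤
      ENNReal.ofReal ((2 * K + 1) ^ d * ρ ^ (β - d * (H - γ))) := by
  rcases S.eq_empty_or_nonempty with rfl | ⟨t₀, ht₀⟩
  · simp [parContent_empty hβ]
  set L : ℝ := 2 * K * ρ ^ (γ : ℝ)
  have hfS : ∀ t ∈ S, ∀ j,
      f t j ∈ Icc (f t₀ j - K * ρ ^ (γ : ℝ)) (f t₀ j - K * ρ ^ (γ : ℝ) + L) := by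
    intro t ht j
    have hdist : dist t t₀ ≤ ρ :=
      (edist_le_ofReal hρ.le).1 ((edist_le_ediam_of_mem ht ht₀).trans hS)
    have := (dist_le_pi_dist (f t) (f t₀) j).trans (hf.dist_le_of_le ht ht₀ hdist)
    rw [Real.dist_eq, abs_le] at this
    constructor <;> linarith [this.1, this.2]
  calc parContent d H β ((fun t => (t, f t)) '' S)
      ≤ parOuterMeasure d H hβ (⋃ i : Fin d → Fin (⌊L / ρ ^ H⌋₊ + 1),
          parRect d H (sInf S) (fun j => f t₀ j - K * ρ ^ (γ : ℝ) + i j * ρ ^ H) ρ) :=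
        parContent_mono <|
          graph_subset_iUnion_parRect hρ (subset_Icc_sInf_of_ediam_le hρ.le hS) hfS
    _ ≤ ∑ i : Fin d → Fin (⌊L / ρ ^ H⌋₊ + 1), ENNReal.ofReal (ρ ^ β) :=
        (measure_iUnion_fintype_le _ _).trans
          (Finset.sum_le_sum fun i _ => parContent_parRect_le hβ _ _ hρ)
    _ = ENNReal.ofReal (((⌊L / ρ ^ H⌋₊ + 1 : ℕ) : ℝ) ^ d * ρ ^ β) := by
        rw [Finset.sum_const, Finset.card_univ, Fintype.card_fun, Fintype.card_fin,
          Fintype.card_fin, nsmul_eq_mul, ENNReal.ofReal_mul (by positivity)]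
        norm_cast
    _ ≤ _ := ENNReal.ofReal_le_ofReal (natFloor_add_one_pow_mul_rpow_le K.2 hγH hρ hρ1)

theorem parContent_graph_le_hausdorffMeasure {s : ℝ} (hβ : 0 < β) (hs : 0 < s)
    {K γ : ℝ≥0} {f : ℝ → Fin d → ℝ} {U : Set ℝ} (hf : HolderOnWith K γ f U) (hγH : (γ : ℝ) ≤ H)
    (hsβ : s ≤ β - d * (H - γ)) {T : Set ℝ} (hTU : T ⊆ U) :
    parContent d H β ((fun t => (t, f t)) '' T) ≤ ENNReal.ofReal ((2 * K + 1) ^ d) * μH[s] T := by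
  set C : ℝ := (2 * K + 1) ^ d
  let ν := OuterMeasure.restrict U
    (OuterMeasure.comap (fun t => (t, f t)) (parOuterMeasure d H hβ))
  have hν : ∀ T, ν T = parContent d H β ((fun t => (t, f t)) '' (T ∩ U)) := fun _ => by
    simp only [ν, OuterMeasure.restrict_apply, OuterMeasure.comap_apply]
    rfl
  have hpiece : ∀ T, ediam T ≤ 2⁻¹ →
      ν T ≤ (ENNReal.ofReal C • fun r : ℝ≥0∞ => r ^ s) (ediam T) := by
    intro T hT
    have hfin : ediam T ≠ ⊤ := ne_top_of_le_ne_top (by simp) hT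
    have hD1 : (ediam T).toReal < 1 :=
      (ENNReal.toReal_mono (by simp) hT).trans_lt (by norm_num)
    rw [hν, Pi.smul_apply, smul_eq_mul, ← ENNReal.ofReal_toReal hfin,
      ENNReal.ofReal_rpow_of_nonneg ENNReal.toReal_nonneg hs.le,
      ← ENNReal.ofReal_mul (by positivity)]
    -- Rectangles have positive size, so scale `ediam T` (possibly `0`) is reached as a limit.
    refine le_ofReal_mul_rpow_of_forall_lt hs hD1 fun ρ hDρ hρ1 => ?_
    have hρ : 0 < ρ := ENNReal.toReal_nonneg.trans_lt hDρ
    have hdiam : ediam (T ∩ U) ≤ ENNReal.ofReal ρ :=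
      (ediam_mono inter_subset_left).trans
        ((ENNReal.le_ofReal_iff_toReal_le hfin hρ.le).2 hDρ.le)
    refine (parContent_graph_le_of_holderOnWith hβ (hf.mono inter_subset_right) hγH hρ hρ1
      hdiam).trans (ENNReal.ofReal_le_ofReal ?_)
    exact mul_le_mul_of_nonneg_left (Real.rpow_le_rpow_of_exponent_ge hρ hρ1 hsβ) (by positivity)
  calc parContent d H β ((fun t => (t, f t)) '' T) = ν T := by rw [hν, inter_eq_left.2 hTU]
    _ ≤ OuterMeasure.mkMetric (ENNReal.ofReal C • fun r : ℝ≥0∞ => r ^ s) T :=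
        OuterMeasure.le_mkMetric _ ν 2⁻¹ (by norm_num) hpiece T
    _ = ENNReal.ofReal C * μH[s] T := by
        rw [OuterMeasure.mkMetric_smul _ ENNReal.ofReal_ne_top
          (ENNReal.ofReal_pos.2 (by positivity)).ne', smul_apply, smul_eq_mul,
          OuterMeasure.coe_mkMetric]
        rfl

theorem parContent_graph_eq_zero_of_dimH_lt {s : ℝ} {K γ : ℝ≥0}
    {f : ℝ → Fin d → ℝ} {U A : Set ℝ} (hf : HolderOnWith K γ f U) (hγH : (γ : ℝ) ≤ H)
    (hAU : A ⊆ U) (hA : dimH A < ENNReal.ofReal s) (hsβ : s ≤ β - d * (H - γ)) :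
    parContent d H β ((fun t => (t, f t)) '' A) = 0 := by
  have hs : 0 < s := ENNReal.ofReal_pos.1 (zero_le.trans_lt hA)
  have hβ : 0 < β := by nlinarith [show (0 : ℝ) ≤ d from d.cast_nonneg]
  have hμ : μH[s] A = 0 := by
    simpa [Real.coe_toNNReal s hs.le] using hausdorffMeasure_of_dimH_lt (d := s.toNNReal) hA
  refine le_antisymm ?_ zero_le
  simpa [hμ] using parContent_graph_le_hausdorffMeasure hβ hs hf hγH hsβ hAU

end parContent

theorem dimH_eq_parDim_graph_of_holder_general (d : ℕ) (H : ℝ) (hH : H ∈ Set.Ioo (0:ℝ) 1)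
    (A : Set ℝ) (hA : A ⊆ Set.Icc 0 1)
    (f : ℝ → Fin d → ℝ)
    (hf : ∀ ε ∈ Set.Ioo (0:ℝ) H, ∃ K : ℝ, 0 ≤ K ∧
      ∀ x ∈ Set.Icc (0:ℝ) 1, ∀ y ∈ Set.Icc (0:ℝ) 1, ‖f x - f y‖ ≤ K * |x - y| ^ (H - ε)) :
    (dimH A).toReal = parDim d H ((fun t => (t, f t)) '' A) := by
  have hfin : dimH A ≠ ⊤ :=
    ne_top_of_le_ne_top (by simp [Real.dimH_univ]) (dimH_mono (subset_univ A))
  have hfst : Prod.fst '' ((fun t => (t, f t)) '' A) = A := by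
    rw [image_image]
    exact image_id' A
  refine (csInf_eq_of_Ioi_subset_of_subset_Ici (fun β hβ => ?_) fun β hβ => ?_).symm
  · obtain ⟨s, hAs, hsβ⟩ := exists_between (mem_Ioi.1 hβ)
    have hη : 0 < (β - s) / (d + 1) := div_pos (by linarith) (by positivity)
    obtain ⟨K, γ, hfK, hγH, hγ⟩ := exists_holderOnWith_exponent_near hH.1 hη hf
    have hdγ : (d : ℝ) * (H - γ) ≤ β - s := by
      calc (d : ℝ) * (H - γ) ≤ (d + 1) * ((β - s) / (d + 1)) := by gcongr; linarith
        _ = β - s := mul_div_cancel₀ _ (by positivity)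
    exact ⟨ENNReal.toReal_nonneg.trans (mem_Ioi.1 hβ).le, parContent_graph_eq_zero_of_dimH_lt hfK
      hγH hA ((ENNReal.lt_ofReal_iff_toReal_lt hfin).2 hAs) (by linarith)⟩
  · exact ENNReal.toReal_le_of_le_ofReal hβ.1
      (hfst ▸ dimH_image_fst_le_of_parContent_eq_zero hβ.1 hβ.2)

/-- For `H ∈ (0,1)`, a Borel set `A ⊆ [0,1]` and `f : [0,1] → ℝ^d` which is
`(H-ε)`-Hölder continuous for every `ε ∈ (0,H)`: `dim(A) = dim_{Ψ,H}(Gr_A(f))`. -/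
theorem dimH_eq_parDim_graph_of_holder (d : ℕ) (H : ℝ) (hH : H ∈ Set.Ioo (0:ℝ) 1)
    (A : Set ℝ) (hAm : MeasurableSet A) (hA : A ⊆ Set.Icc 0 1)
    (f : ℝ → Fin d → ℝ)
    (hf : ∀ ε ∈ Set.Ioo (0:ℝ) H, ∃ K : ℝ, 0 ≤ K ∧
      ∀ x ∈ Set.Icc (0:ℝ) 1, ∀ y ∈ Set.Icc (0:ℝ) 1, ‖f x - f y‖ ≤ K * |x - y| ^ (H - ε)) :
    (dimH A).toReal = parDim d H ((fun t => (t, f t)) '' A) :=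
  dimH_eq_parDim_graph_of_holder_general d H hH A hA f hf
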